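/- (ENO property of the proposed weights.) Let p ≥ 1 be a natural number, let d_C, d_D > 0, and let c, C > 0. Suppose β_C, β_D, ζ, ε : (0,δ) → ℝ satisfy, for all sufficiently small h > 0: 0 ≤ β_C(h) ≤ C·h² (smooth stencil), β_D(h) ≥ c (discontinuous stencil), c ≤ ζ(h) ≤ C, and 0 ≤ ε(h) ≤ C·h². Define α_C(h) = d_C(1 + (ζ(h)/(β_C(h)+ε(h)))ᵖ) and α_D(h) = d_D(1 + (ζ(h)/(β_D(h)+ε(h)))ᵖ), where β_C(h)+ε(h) > 0. Then α_D(h)/α_C(h) = O(h^{2p}) as h → 0⁺; consequently the normalized weight ω_D(h) = α_D(h)/(α_C(h)+α_D(h)) satisfies ω_D(h) = O(h^{2p}), while ω_C(h) = α_C(h)/(α_C(h)+α_D(h)) is bounded away from 0 as h → 0⁺. -/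

import Mathlib

open Filter Asymptotics Topology

/-- ENO property of the proposed nonlinear weights: if the smooth-stencil
indicator is `O(h²)`, the discontinuous-stencil indicator is bounded below,
the global indicator `ζ` is `Θ(1)`, and the regularization `ε` is `O(h²)`,
then the weight of the discontinuous stencil is `O(h^{2p})` while the weight
of the smooth stencil stays bounded away from `0` as `h → 0⁺`. -/
theorem wenoUD5_ENO_property (p : ℕ) (hp : 1 ≤ p) (dC dD c C : ℝ)
    (hdC : 0 < dC) (hdD : 0 < dD) (hc : 0 < c) (hC : 0 < C)
    (βC βD ζ ε : ℝ → ℝ)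
    (h1 : ∀ᶠ h in 𝓝[>] (0:ℝ), 0 ≤ βC h ∧ βC h ≤ C * h^2)
    (h2 : ∀ᶠ h in 𝓝[>] (0:ℝ), c ≤ βD h)
    (h3 : ∀ᶠ h in 𝓝[>] (0:ℝ), c ≤ ζ h ∧ ζ h ≤ C)
    (h4 : ∀ᶠ h in 𝓝[>] (0:ℝ), 0 ≤ ε h ∧ ε h ≤ C * h^2)
    (h5 : ∀ᶠ h in 𝓝[>] (0:ℝ), 0 < βC h + ε h) :
    ((fun h : ℝ =>
        (dD * (1 + (ζ h / (βD h + ε h))^p)) / (dC * (1 + (ζ h / (βC h + ε h))^p)))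
      =O[𝓝[>] (0:ℝ)] fun h => h ^ (2*p))
    ∧ ((fun h : ℝ =>
        (dD * (1 + (ζ h / (βD h + ε h))^p))
          / (dC * (1 + (ζ h / (βC h + ε h))^p) + dD * (1 + (ζ h / (βD h + ε h))^p)))
      =O[𝓝[>] (0:ℝ)] fun h => h ^ (2*p))
    ∧ (∃ c' > 0, ∀ᶠ h in 𝓝[>] (0:ℝ),
        c' ≤ (dC * (1 + (ζ h / (βC h + ε h))^p))
          / (dC * (1 + (ζ h / (βC h + ε h))^p) + dD * (1 + (ζ h / (βD h + ε h))^p))) := by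

  have hmem : ∀ᶠ h in 𝓝[>] (0:ℝ), 0 < h := eventually_mem_nhdsWithin
  set MD := dD * (1 + (C/c)^p) with hMDdef
  have hMDpos : 0 < MD := by positivity
  -- eventual pointwise facts
  have key : ∀ᶠ h in 𝓝[>] (0:ℝ),
      (0 < dC * (1 + (ζ h / (βC h + ε h))^p)) ∧
      (0 < dD * (1 + (ζ h / (βD h + ε h))^p)) ∧
      dD * (1 + (ζ h / (βD h + ε h))^p) ≤ MD ∧
      dC * (c^p / ((2*C)^p * h^(2*p))) ≤ dC * (1 + (ζ h / (βC h + ε h))^p) ∧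
      0 < h := by
    filter_upwards [h1, h2, h3, h4, h5, hmem] with h hb hbD hz he hA hh
    obtain ⟨hb0, hbC⟩ := hb
    obtain ⟨hz1, hz2⟩ := hz
    obtain ⟨he0, heC⟩ := he
    have hzpos : 0 < ζ h := lt_of_lt_of_le hc hz1
    have hDpos : 0 < βD h + ε h := by linarith
    have hcD : c ≤ βD h + ε h := by linarith
    have hAle : βC h + ε h ≤ 2*C*h^2 := by nlinarith
    have hq1 : 0 < dC * (1 + (ζ h / (βC h + ε h))^p) := by positivity
    have hq2 : 0 < dD * (1 + (ζ h / (βD h + ε h))^p) := by positivity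
    refine ⟨hq1, hq2, ?_, ?_, hh⟩
    · have hd1 : ζ h / (βD h + ε h) ≤ C / c :=
        div_le_div₀ hC.le hz2 hc hcD
      have hd2 : (ζ h / (βD h + ε h))^p ≤ (C/c)^p :=
        pow_le_pow_left₀ (by positivity) hd1 p
      rw [hMDdef]
      have := add_le_add_left hd2 1
      nlinarith
    · have h2C : 0 < 2*C*h^2 := by positivity
      have hd1 : c / (2*C*h^2) ≤ ζ h / (βC h + ε h) :=
        div_le_div₀ hzpos.le hz1 hA hAle
      have hd2 : (c / (2*C*h^2))^p ≤ (ζ h / (βC h + ε h))^p :=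
        pow_le_pow_left₀ (by positivity) hd1 p
      have heq : (c / (2*C*h^2))^p = c^p / ((2*C)^p * h^(2*p)) := by
        rw [div_pow, mul_pow, ← pow_mul]
      rw [heq] at hd2
      have hx : (ζ h / (βC h + ε h))^p ≤ 1 + (ζ h / (βC h + ε h))^p := by linarith
      have := le_trans hd2 hx
      nlinarith
  set K := MD * (2*C)^p / (dC * c^p) with hKdef
  have part1 : (fun h : ℝ =>
        (dD * (1 + (ζ h / (βD h + ε h))^p)) / (dC * (1 + (ζ h / (βC h + ε h))^p)))
      =O[𝓝[>] (0:ℝ)] fun h => h ^ (2*p) := by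
    apply IsBigO.of_bound K
    filter_upwards [key] with h ⟨hq1, hq2, hDle, hCge, hh⟩
    have hLpos : 0 < dC * (c^p / ((2*C)^p * h^(2*p))) := by positivity
    have hfle : (dD * (1 + (ζ h / (βD h + ε h))^p)) / (dC * (1 + (ζ h / (βC h + ε h))^p))
        ≤ MD / (dC * (c^p / ((2*C)^p * h^(2*p)))) :=
      div_le_div₀ hMDpos.le hDle hLpos hCge
    have heq : MD / (dC * (c^p / ((2*C)^p * h^(2*p)))) = K * h^(2*p) := by
      rw [hKdef]
      field_simp
    rw [heq] at hfle
    have hnn : 0 ≤ (dD * (1 + (ζ h / (βD h + ε h))^p)) / (dC * (1 + (ζ h / (βC h + ε h))^p)) :=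
      div_nonneg hq2.le hq1.le
    rw [Real.norm_eq_abs, Real.norm_eq_abs, abs_of_nonneg hnn,
      abs_of_nonneg (by positivity : (0:ℝ) ≤ h^(2*p))]
    exact hfle
  refine ⟨part1, ?_, ?_⟩
  · refine (IsBigO.of_bound 1 ?_).trans part1
    filter_upwards [key] with h ⟨hq1, hq2, _, _, _⟩
    have hle : (dD * (1 + (ζ h / (βD h + ε h))^p))
        / (dC * (1 + (ζ h / (βC h + ε h))^p) + dD * (1 + (ζ h / (βD h + ε h))^p))
        ≤ (dD * (1 + (ζ h / (βD h + ε h))^p)) / (dC * (1 + (ζ h / (βC h + ε h))^p)) :=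
      div_le_div_of_nonneg_left hq2.le hq1 (by linarith)
    have hnn : 0 ≤ (dD * (1 + (ζ h / (βD h + ε h))^p))
        / (dC * (1 + (ζ h / (βC h + ε h))^p) + dD * (1 + (ζ h / (βD h + ε h))^p)) :=
      div_nonneg hq2.le (by linarith)
    rw [one_mul, Real.norm_eq_abs, Real.norm_eq_abs, abs_of_nonneg hnn,
      abs_of_nonneg (div_nonneg hq2.le hq1.le)]
    exact hle
  · refine ⟨1/2, by norm_num, ?_⟩
    have htend : Tendsto (fun h : ℝ => dC * (c^p / ((2*C)^p * h^(2*p)))) (𝓝[>] (0:ℝ)) atTop := by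
      have h1' : Tendsto (fun h : ℝ => h^(2*p)) (𝓝[>] (0:ℝ)) (𝓝[>] (0:ℝ)) := by
        apply tendsto_nhdsWithin_of_tendsto_nhds_of_eventually_within
        · have := (continuous_pow (2*p)).tendsto (0:ℝ)
          simpa [zero_pow (by omega : 2*p ≠ 0)] using this.mono_left nhdsWithin_le_nhds
        · filter_upwards [hmem] with h hh
          exact pow_pos hh _
      have h2' : Tendsto (fun x : ℝ => dC * (c^p / ((2*C)^p * x))) (𝓝[>] (0:ℝ)) atTop := by
        have hr : (0:ℝ) < dC * c^p / (2*C)^p := by positivity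
        have := tendsto_inv_nhdsGT_zero.const_mul_atTop hr
        refine this.congr fun x => ?_
        field_simp
      exact h2'.comp h1'
    have hbig : ∀ᶠ h in 𝓝[>] (0:ℝ), MD ≤ dC * (c^p / ((2*C)^p * h^(2*p))) :=
      htend.eventually_ge_atTop MD
    filter_upwards [key, hbig] with h ⟨hq1, hq2, hDle, hCge, hh⟩ hMle
    have hDleC : dD * (1 + (ζ h / (βD h + ε h))^p) ≤ dC * (1 + (ζ h / (βC h + ε h))^p) :=
      le_trans hDle (le_trans hMle hCge)
    have hsum : dC * (1 + (ζ h / (βC h + ε h))^p) + dD * (1 + (ζ h / (βD h + ε h))^p)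
        ≤ 2 * (dC * (1 + (ζ h / (βC h + ε h))^p)) := by linarith
    have := div_le_div_of_nonneg_left hq1.le (by linarith : (0:ℝ) <
        dC * (1 + (ζ h / (βC h + ε h))^p) + dD * (1 + (ζ h / (βD h + ε h))^p)) hsum
    calc (1:ℝ)/2 = (dC * (1 + (ζ h / (βC h + ε h))^p)) / (2 * (dC * (1 + (ζ h / (βC h + ε h))^p))) := by
          rw [eq_div_iff (by positivity)]; ring
      _ ≤ _ := this
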